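/- arXiv:2305.06183 — 6 statements merged into one kernel-verified Lean document; each statement's English description precedes it below -/
import Mathlib

section
/- Let a₀ ≤ a₁ ≤ a₂ ≤ a₃ ≤ a₄ and d be positive integers with d < a₀ + a₁ + a₂ + a₃ + a₄. Suppose a₃ | d and a₄ | d, write d = l·a₃ = m·a₄ with l ≥ m ≥ 2. Then l < 4m/(m−1), and in particular l ≤ 7. -/
/-- If `a₃ ∣ d` and `a₄ ∣ d` for the weights of a Fano weighted hypersurface of
degree `d`, with `d = l·a₃ = m·a₄` and `l ≥ m ≥ 2`, then `l < 4m/(m−1)`, and in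
particular `l ≤ 7`. -/
theorem quotient_bound
    (a0 a1 a2 a3 a4 d l m : ℕ)
    (ha0 : 0 < a0) (h01 : a0 ≤ a1) (h12 : a1 ≤ a2) (h23 : a2 ≤ a3) (h34 : a3 ≤ a4)
    (hd : 0 < d)
    (hfano : d < a0 + a1 + a2 + a3 + a4)
    (hl : d = l * a3) (hm : d = m * a4)
    (hlm : m ≤ l) (hm2 : 2 ≤ m) :
    (l : ℚ) < 4 * m / (m - 1) ∧ l ≤ 7 := by
  have ha3 : 0 < a3 := by
    rcases Nat.eq_zero_or_pos a3 with h | h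
    · simp [h, hl] at hd
    · exact h
  -- l * a3 < 4 * a3 + a4
  have h1 : l * a3 < 4 * a3 + a4 := by omega
  -- multiply by m and substitute m * a4 = l * a3
  have h2 : m * (l * a3) < m * (4 * a3) + l * a3 := by
    calc m * (l * a3) < m * (4 * a3 + a4) := by
          exact Nat.mul_lt_mul_of_le_of_lt (le_refl m) h1 (by omega)
      _ = m * (4 * a3) + m * a4 := by ring
      _ = m * (4 * a3) + l * a3 := by rw [← hm, hl]
  have key : m * l < 4 * m + l := by
    have := h2
    nlinarith [ha3]
  have hle7 : l ≤ 7 := by nlinarith [key, hm2, hlm]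
  refine ⟨?_, hle7⟩
  have hm1 : (0 : ℚ) < (m : ℚ) - 1 := by
    have : (2 : ℚ) ≤ (m : ℚ) := by exact_mod_cast hm2
    linarith
  rw [lt_div_iff₀ hm1]
  have keyQ : (m : ℚ) * l < 4 * m + l := by exact_mod_cast key
  nlinarith [keyQ]
end

section
/- Consider the polynomial h₆(x,t,w) = w² + t³ + α·w·t·x + β·t²·x² + γ·w·x³ + δ·t·x⁴ + ε·x⁶ in variables x, t, w over ℂ, where α, β, γ, δ, ε ∈ ℂ are arbitrary. Then h₆ is irreducible in ℂ[x,t,w]. -/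
/-!
Treat `x` as a constant. After `t ↦ -t`, `h₆` is the affine Weierstrass polynomial over `R[x]` with
coefficients `a₁ = -αx, a₂ = -βx², a₃ = γx³, a₄ = δx⁴, a₆ = -εx⁶` (the weights of the coefficients
are exactly the Weierstrass weights). Weierstrass polynomials over a domain are irreducible: a
factorisation `(w + c₁)(w + c₂)` would force `deg_t c₁ + deg_t c₂ = 3`, hence `deg_t (c₁ + c₂) ≥ 2`,
whereas the coefficient of `w` has `t`-degree at most one.
-/

open MvPolynomial Polynomial.Bivariate

section

variable (R : Type*) [CommRing R]

noncomputable def weierstrassCoordinates :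
    MvPolynomial (Fin 3) R ≃ₐ[R] (MvPolynomial (Fin 1) R)[X][Y] :=
  (renameEquiv R (Equiv.swap 0 2)).trans <| (finSuccEquiv R 2).trans <|
    (Polynomial.mapAlgEquiv (finSuccEquiv R 1)).trans <|
      Polynomial.mapAlgEquiv (Polynomial.algEquivAevalNegX.restrictScalars R)

lemma weierstrassCoordinates_X_zero :
    weierstrassCoordinates R (X 0) = Polynomial.C (Polynomial.C (X 0)) := by
  simp only [weierstrassCoordinates, AlgEquiv.trans_apply, renameEquiv_apply, rename_X]
  rw [show Equiv.swap (0 : Fin 3) 2 0 = (1 : Fin 2).succ by decide, finSuccEquiv_X_succ]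
  have h := finSuccEquiv_X_succ (R := R) (j := (0 : Fin 1))
  rw [Fin.succ_zero_eq_one] at h
  simp [h]

lemma weierstrassCoordinates_X_one :
    weierstrassCoordinates R (X 1) =
      -Polynomial.C (Polynomial.X : Polynomial (MvPolynomial (Fin 1) R)) := by
  simp only [weierstrassCoordinates, AlgEquiv.trans_apply, renameEquiv_apply, rename_X]
  rw [show Equiv.swap (0 : Fin 3) 2 1 = (0 : Fin 2).succ by decide, finSuccEquiv_X_succ]
  simp [finSuccEquiv_X_zero]

lemma weierstrassCoordinates_X_two : weierstrassCoordinates R (X 2) = Y := by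
  simp [weierstrassCoordinates, finSuccEquiv_X_zero]

lemma weierstrassCoordinates_C (a : R) :
    weierstrassCoordinates R (C a) = Polynomial.C (Polynomial.C (C a)) := by
  simpa using (weierstrassCoordinates R).commutes a

end

section

variable {R : Type*} [CommRing R]

noncomputable def h6 (α β γ δ ε : R) : MvPolynomial (Fin 3) R :=
  (X 2) ^ 2 + (X 1) ^ 3 + C α * X 2 * X 1 * X 0 + C β * (X 1) ^ 2 * (X 0) ^ 2 +
    C γ * X 2 * (X 0) ^ 3 + C δ * X 1 * (X 0) ^ 4 + C ε * (X 0) ^ 6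

noncomputable def h6Curve (α β γ δ ε : R) : WeierstrassCurve (MvPolynomial (Fin 1) R) where
  a₁ := -(C α * X 0)
  a₂ := -(C β * X 0 ^ 2)
  a₃ := C γ * X 0 ^ 3
  a₄ := C δ * X 0 ^ 4
  a₆ := -(C ε * X 0 ^ 6)

lemma weierstrassCoordinates_h6 (α β γ δ ε : R) :
    weierstrassCoordinates R (h6 α β γ δ ε) = (h6Curve α β γ δ ε).toAffine.polynomial := by
  simp only [h6, WeierstrassCurve.Affine.polynomial, h6Curve, map_add, map_mul, map_pow, map_neg,
    weierstrassCoordinates_C, weierstrassCoordinates_X_zero, weierstrassCoordinates_X_one,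
    weierstrassCoordinates_X_two]
  ring

theorem irreducible_h6 [IsDomain R] (α β γ δ ε : R) : Irreducible (h6 α β γ δ ε) := by
  rw [← MulEquiv.irreducible_iff (weierstrassCoordinates R), weierstrassCoordinates_h6]
  exact WeierstrassCurve.Affine.irreducible_polynomial

end

/-- The quasi-homogeneous polynomial
`h₆ = w² + t³ + α·w·t·x + β·t²·x² + γ·w·x³ + δ·t·x⁴ + ε·x⁶`
is irreducible in `ℂ[x,t,w]` for all values of `α, β, γ, δ, ε ∈ ℂ`.
Here `x = X 0`, `t = X 1`, `w = X 2`. -/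
theorem h6_irreducible (α β γ δ ε : ℂ) :
    Irreducible
      ((X 2) ^ 2 + (X 1) ^ 3 + C α * X 2 * X 1 * X 0 + C β * (X 1) ^ 2 * (X 0) ^ 2 +
        C γ * X 2 * (X 0) ^ 3 + C δ * X 1 * (X 0) ^ 4 + C ε * (X 0) ^ 6 :
        MvPolynomial (Fin 3) ℂ) :=
  irreducible_h6 α β γ δ ε
end

section
/- Let X = X₁₈ ⊂ P(1,2,3,5,9) be a Fano weighted hypersurface with (A³) = 1/15 where A is the ample generator of the class group, and let ψ : Y → X be the Kawamata blow-up at a terminal quotient singular point of type ⅓(1,1,2) with exceptional divisor E, so that (E³) = 9/2 and discrepancy a_E(K_X) = 1/3. If S̃ ∼_ℚ ψ*A − (2/3)E and T̃ ∼_ℚ 2ψ*A − (1/3)E, then (T̃² · S̃) = 4/15 − (2/27)(9/2) < 0. -/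
/-!
Expanding `I ![T, T, S]` trilinearly, every mixed product of `A` and `E` vanishes, so only
`2 · 2 · 1 · (A³) = 4/15` and `(-1/3) · (-1/3) · (-2/3) · (E³) = -(2/27) · (9/2)` survive.
-/

namespace MultilinearMap

variable {R M N : Type*} [CommSemiring R] [AddCommMonoid M] [Module R M] [AddCommMonoid N]
  [Module R N]

theorem curryLeft_apply_vecCons {n : ℕ} (f : MultilinearMap R (fun _ : Fin (n + 1) => M) N)
    (x : M) (m : Fin n → M) : f.curryLeft x m = f (Matrix.vecCons x m) :=
  rfl

/-- Currying turns linearity in each slot into `map_sub`/`map_smul` of ordinary linear maps. -/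
theorem apply_vec3_eq_curryLeft (I : MultilinearMap R (fun _ : Fin 3 => M) N) (x y z : M) :
    I ![x, y, z] = ((I.curryLeft x).curryLeft y).curryLeft z ![] :=
  rfl

end MultilinearMap

/-- The intersection-number computation excluding the `⅓(1,1,2)` point of
`X₁₈ ⊂ P(1,2,3,5,9)` as a maximal center.  The intersection pairing on the
Kawamata blow-up `Y` is a trilinear form `I` determined by
`(ψ*A)³ = (A³) = 1/15`, all mixed products of `ψ*A` and `E` vanish, and
`(E³) = 9/2`.  For `S̃ = ψ*A − (2/3)E` and `T̃ = 2ψ*A − (1/3)E` one has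
`(T̃²·S̃) = 4/15 − (2/27)·(9/2) < 0`. -/
theorem intersection_number_negative
    {V : Type*} [AddCommGroup V] [Module ℚ V]
    (I : MultilinearMap ℚ (fun _ : Fin 3 => V) ℚ) (A E : V)
    (hAAA : I ![A, A, A] = 1 / 15)
    (hAAE : I ![A, A, E] = 0) (hAEA : I ![A, E, A] = 0) (hEAA : I ![E, A, A] = 0)
    (hAEE : I ![A, E, E] = 0) (hEAE : I ![E, A, E] = 0) (hEEA : I ![E, E, A] = 0)
    (hEEE : I ![E, E, E] = 9 / 2)
    (S T : V)
    (hS : S = A - (2 / 3 : ℚ) • E)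
    (hT : T = (2 : ℚ) • A - (1 / 3 : ℚ) • E) :
    I ![T, T, S] = 4 / 15 - (2 / 27) * (9 / 2) ∧ I ![T, T, S] < 0 := by
  have hTTS : I ![T, T, S] = 4 / 15 - (2 / 27) * (9 / 2) := by
    rw [I.apply_vec3_eq_curryLeft, hS, hT]
    simp only [map_sub, map_smul, sub_apply, smul_apply, MultilinearMap.curryLeft_apply_vecCons,
      smul_eq_mul]
    rw [hAAA, hAAE, hAEA, hEAA, hAEE, hEAE, hEEA, hEEE]
    ring
  exact ⟨hTTS, by rw [hTTS]; norm_num⟩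
end

section
/- Let φ = x² + y³ + y²f(z,u) + yg(z,u) + h(z,u) ∈ ℂ[[x,y,z,u]] with f,g,h ∈ ℂ[[z,u]]. Let w be the weight with w(x,y,z,u) = (3,2,2,1). Assume w₂(f) ≥ 2, w₂(g) ≥ 4, w₂(h) ≥ 6, where w₂ is the weight w₂(z,u)=(2,1). Then w(φ) = 6, and the weight-6 part of φ is x² + y³ + y²·f_{w₂=2} + y·g_{w₂=4} + h_{w₂=6}, which is an irreducible polynomial; hence the exceptional divisor of the weighted blow-up with weight (3,2,2,1) has discrepancy (3+2+2+1) − 6 − 1 = 1 over the origin. -/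
open MvPolynomial

open Polynomial in
/-- A monic quadratic `X² + r` over a domain is irreducible if `-r` is not a square. -/
lemma aux_X_sq_add_C_irreducible {R : Type*} [CommRing R] [IsDomain R] (r : R)
    (h : ∀ s : R, s ^ 2 ≠ -r) :
    Irreducible (Polynomial.X ^ 2 + Polynomial.C r : R[X]) := by
  have hm : (Polynomial.X ^ 2 + Polynomial.C r : R[X]).Monic :=
    Polynomial.monic_X_pow_add (lt_of_le_of_lt Polynomial.degree_C_le (by norm_num))
  by_contra hir
  obtain ⟨c₁, c₂, h0, h1⟩ :=
    (hm.not_irreducible_iff_exists_add_mul_eq_coeff Polynomial.natDegree_X_pow_add_C).mp hir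
  have hc0 : (Polynomial.X ^ 2 + Polynomial.C r : R[X]).coeff 0 = r := by simp
  have hc1 : (Polynomial.X ^ 2 + Polynomial.C r : R[X]).coeff 1 = 0 := by
    simp [Polynomial.coeff_X_pow]
  rw [hc0] at h0
  rw [hc1] at h1
  have hc₂ : c₂ = -c₁ := by linear_combination -h1
  exact h c₁ (by rw [sq]; linear_combination h0 + c₁ * hc₂)

lemma aux_finSuccEquiv_C {R : Type*} [CommSemiring R] {n : ℕ} (a : R) :
    finSuccEquiv R n (MvPolynomial.C a) = Polynomial.C (MvPolynomial.C a) := by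
  simp [finSuccEquiv_apply]

/-- Divisors of discrepancy `1` over a `cE` point, case of the weight
`w(x,y,z,u) = (3,2,2,1)`.  With `w₂(z,u) = (2,1)`, and `f`, `g`, `h` of
`w₂`-weight `≥ 2`, `≥ 4`, `≥ 6` respectively, the weight-6 part of
`φ = x² + y³ + y²f + yg + h` is
`x² + y³ + y²·f_{w₂=2} + y·g_{w₂=4} + h_{w₂=6}`, where
`f_{w₂=2} = a·z + b·u²`, `g_{w₂=4} = c·z² + c'·z·u² + c''·u⁴`,
`h_{w₂=6} = p·z³ + p'·z²u² + p''·zu⁴ + p'''·u⁶`.  This polynomial is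
irreducible, and the discrepancy of the corresponding weighted blow-up is
`(3+2+2+1) − 6 − 1 = 1`.  Here `x = X 0`, `y = X 1`, `z = X 2`, `u = X 3`. -/
theorem weight6_part_irreducible
    (a b c c' c'' p p' p'' p''' : ℂ) :
    Irreducible
      ((X 0) ^ 2 + (X 1) ^ 3
        + (X 1) ^ 2 * (C a * X 2 + C b * (X 3) ^ 2)
        + X 1 * (C c * (X 2) ^ 2 + C c' * X 2 * (X 3) ^ 2 + C c'' * (X 3) ^ 4)
        + (C p * (X 2) ^ 3 + C p' * (X 2) ^ 2 * (X 3) ^ 2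
            + C p'' * X 2 * (X 3) ^ 4 + C p''' * (X 3) ^ 6) :
        MvPolynomial (Fin 4) ℂ)
    ∧ (3 + 2 + 2 + 1) - 6 - 1 = (1 : ℤ) := by
  refine ⟨?_, by norm_num⟩
  -- the cubic in `y` (over `ℂ[y,z,u] = MvPolynomial (Fin 3) ℂ`, with `y = X 0` etc.)
  set r : MvPolynomial (Fin 3) ℂ :=
    (X 0) ^ 3 + (X 0) ^ 2 * (C a * X 1 + C b * (X 2) ^ 2)
      + X 0 * (C c * (X 1) ^ 2 + C c' * X 1 * (X 2) ^ 2 + C c'' * (X 2) ^ 4)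
      + (C p * (X 1) ^ 3 + C p' * (X 1) ^ 2 * (X 2) ^ 2
          + C p'' * X 1 * (X 2) ^ 4 + C p''' * (X 2) ^ 6) with hr
  -- transfer along `finSuccEquiv` in the variable `x`
  rw [← MulEquiv.irreducible_iff (finSuccEquiv ℂ 3)]
  have key : (finSuccEquiv ℂ 3)
      ((X 0) ^ 2 + (X 1) ^ 3
        + (X 1) ^ 2 * (C a * X 2 + C b * (X 3) ^ 2)
        + X 1 * (C c * (X 2) ^ 2 + C c' * X 2 * (X 3) ^ 2 + C c'' * (X 3) ^ 4)
        + (C p * (X 2) ^ 3 + C p' * (X 2) ^ 2 * (X 3) ^ 2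
            + C p'' * X 2 * (X 3) ^ 4 + C p''' * (X 3) ^ 6)) =
      Polynomial.X ^ 2 + Polynomial.C r := by
    have e1 : (X 1 : MvPolynomial (Fin 4) ℂ) = X (Fin.succ 0) := rfl
    have e2 : (X 2 : MvPolynomial (Fin 4) ℂ) = X (Fin.succ 1) := rfl
    have e3 : (X 3 : MvPolynomial (Fin 4) ℂ) = X (Fin.succ 2) := rfl
    rw [e1, e2, e3, hr]
    simp only [map_add, map_mul, map_pow, finSuccEquiv_X_zero, finSuccEquiv_X_succ,
      aux_finSuccEquiv_C, Polynomial.C_1]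
    ring
  rw [key]
  apply aux_X_sq_add_C_irreducible
  intro s hs
  -- transfer along `finSuccEquiv` in the variable `y` and compare degrees
  have hs' := congrArg (finSuccEquiv ℂ 2) hs
  rw [map_pow, map_neg] at hs'
  have hre : (finSuccEquiv ℂ 2) r =
      Polynomial.C 1 * Polynomial.X ^ 3
        + Polynomial.C (C a * X 0 + C b * (X 1) ^ 2) * Polynomial.X ^ 2
        + Polynomial.C (C c * (X 0) ^ 2 + C c' * X 0 * (X 1) ^ 2 + C c'' * (X 1) ^ 4)
            * Polynomial.X
        + Polynomial.C (C p * (X 0) ^ 3 + C p' * (X 0) ^ 2 * (X 1) ^ 2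
            + C p'' * X 0 * (X 1) ^ 4 + C p''' * (X 1) ^ 6) := by
    have e1 : (X 1 : MvPolynomial (Fin 3) ℂ) = X (Fin.succ 0) := rfl
    have e2 : (X 2 : MvPolynomial (Fin 3) ℂ) = X (Fin.succ 1) := rfl
    rw [hr, e1, e2]
    simp only [map_add, map_mul, map_pow, finSuccEquiv_X_zero, finSuccEquiv_X_succ,
      aux_finSuccEquiv_C, Polynomial.C_1]
    ring
  have hdeg : ((finSuccEquiv ℂ 2) r).natDegree = 3 := by
    rw [hre]
    exact Polynomial.natDegree_cubic one_ne_zero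
  have : ((finSuccEquiv ℂ 2) s ^ 2).natDegree = 3 := by
    rw [hs', Polynomial.natDegree_neg, hdeg]
  rw [Polynomial.natDegree_pow] at this
  omega
end

section
/- Let X = (φ = 0) ⊂ ℂ⁴_{x,y,z,u} be a hypersurface, w a weight with positive integer values (a₁,a₂,a₃,a₄) on (x₁,x₂,x₃,x₄), d = w(φ). Suppose φ_{w=d} ∈ (x₁,x₂,x₃)³, φ_{w=d+1} ∈ (x₁,x₂,x₃)², and φ_{w=d+2} ∈ (x₁,x₂,x₃). Then in the x₄-chart of the weighted blow-up, the strict transform has a point of multiplicity ≥ 3 at (0,0,0,1); in particular every monomial of φ_{x₄} := φ(x₁x₄^{a₁}, x₂x₄^{a₂}, x₃x₄^{a₃}, x₄^{a₄})/x₄^d lies in the ideal (x₁,x₂,x₃,x₄)³. -/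
/-- Criterion for non-terminality of a weighted blow-up, at the level of
monomials: let `w` be a weight with positive values `a : Fin 4 → ℕ` and let
`d` be the `w`-order of `φ`.  If every monomial of `φ` of `w`-weight `d`
(resp. `d+1`, `d+2`) lies in `(x₁,x₂,x₃)³` (resp. `(x₁,x₂,x₃)²`,
`(x₁,x₂,x₃)`), then for each monomial `x^e` of `φ` (of `w`-weight `W ≥ d`),
the transformed monomial `x₁^{e₀}x₂^{e₁}x₃^{e₂}x₄^{W−d}` of
`φ_{x₄} = φ(x₁x₄^{a₁},…,x₄^{a₄})/x₄^d` lies in `(x₁,x₂,x₃,x₄)³`. -/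
theorem blowup_chart_multiplicity
    (a : Fin 4 → ℕ) (ha : ∀ i, 0 < a i)
    (d : ℕ) (e : Fin 4 → ℕ) (W : ℕ)
    (hW : W = e 0 * a 0 + e 1 * a 1 + e 2 * a 2 + e 3 * a 3)
    (hWd : d ≤ W)
    (h0 : W = d → 3 ≤ e 0 + e 1 + e 2)
    (h1 : W = d + 1 → 2 ≤ e 0 + e 1 + e 2)
    (h2 : W = d + 2 → 1 ≤ e 0 + e 1 + e 2) :
    3 ≤ e 0 + e 1 + e 2 + (W - d) := by
  by_cases hc0 : W = d
  · have := h0 hc0; omega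
  · by_cases hc1 : W = d + 1
    · have := h1 hc1; omega
    · by_cases hc2 : W = d + 2
      · have := h2 hc2; omega
      · omega
end

section
/- In the polynomial ring ℂ[y,z] (with parameters λ, μ, ν, δ, ε, δ₆ ∈ ℂ), substitute the parametrization u = 0, t = λyz + μy², w = δyz² + εy²z + νy³ into F̂(u,y,z,t,w) where F̂ is as in the cE₇ family. The result F̄ has leading z-terms F̄ = δ²y²z⁵ + 2δεy³z⁴ + ... ; requiring F̄ = 0 forces δ = 0, then ε = 0, and finally yields the system ν² + νλδ₆ = 0 and νμδ₆ + 1 = 0; consequently μ ≠ 0, ν ≠ 0, and δ₆ ≠ 0. -/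
open MvPolynomial

/-- Classification of degree-1 curves through the `cE₇` point of
`X̂₇ ⊂ P(1,1,1,2,3)`: substituting the parametrization `u = 0`,
`t = λyz + μy²`, `w = δyz² + εy²z + νy³` into the defining polynomial `F̂`
(whose restriction to `u = 0` is `w²z + δ₆·w·t·y² + y⁷`) gives
`F̄ = δ²y²z⁵ + 2δεy³z⁴ + …`; the vanishing `F̄ = 0` forces `δ = 0`, then
`ε = 0`, and the system `ν² + νλδ₆ = 0`, `νμδ₆ + 1 = 0`; consequently
`μ ≠ 0`, `ν ≠ 0`, `δ₆ ≠ 0`.  Here `y = X 0`, `z = X 1`. -/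
theorem degree_one_curve_classification
    (lam mu nu del eps d6 : ℂ)
    (y z t w Fbar : MvPolynomial (Fin 2) ℂ)
    (hy : y = X 0) (hz : z = X 1)
    (ht : t = C lam * y * z + C mu * y ^ 2)
    (hw : w = C del * y * z ^ 2 + C eps * y ^ 2 * z + C nu * y ^ 3)
    (hF : Fbar = w ^ 2 * z + C d6 * w * t * y ^ 2 + y ^ 7)
    (hvanish : Fbar = 0) :
    del = 0 ∧ eps = 0 ∧ nu ^ 2 + nu * lam * d6 = 0 ∧ nu * mu * d6 + 1 = 0 ∧
      mu ≠ 0 ∧ nu ≠ 0 ∧ d6 ≠ 0 := by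
  have h : ∀ s : ℂ,
      (del * s ^ 2 + eps * s + nu) ^ 2 * s
        + d6 * (del * s ^ 2 + eps * s + nu) * (lam * s + mu) + 1 = 0 := by
    intro s
    have h0 := congrArg (eval (fun i : Fin 2 => if i = 0 then 1 else s)) hvanish
    simp [hF, hw, ht, hy, hz] at h0
    linear_combination h0
  have h0 := h 0
  have h1 := h 1
  have h2 := h 2
  have h3 := h 3
  have h4 := h 4
  have h5 := h 5
  have hdel : del = 0 := by
    have hsq : del ^ 2 = 0 := by
      linear_combination (-1/120 : ℂ) * h0 + (1/24 : ℂ) * h1 - (1/12 : ℂ) * h2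
        + (1/12 : ℂ) * h3 - (1/24 : ℂ) * h4 + (1/120 : ℂ) * h5
    exact pow_eq_zero_iff (two_ne_zero) |>.mp hsq
  have heps : eps = 0 := by
    have hsq : eps ^ 2 = 0 := by
      linear_combination (-17/24 : ℂ) * h0 + (71/24 : ℂ) * h1 - (59/12 : ℂ) * h2
        + (49/12 : ℂ) * h3 - (41/24 : ℂ) * h4 + (7/24 : ℂ) * h5
        - (2 * nu + d6 * lam) * hdel
    exact pow_eq_zero_iff (two_ne_zero) |>.mp hsq
  have hc1 : nu ^ 2 + nu * lam * d6 = 0 := by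
    linear_combination (-137/60 : ℂ) * h0 + (5 : ℂ) * h1 - (5 : ℂ) * h2
      + (10/3 : ℂ) * h3 - (5/4 : ℂ) * h4 + (1/5 : ℂ) * h5
      - d6 * mu * heps
  have hc0 : nu * mu * d6 + 1 = 0 := by linear_combination h0
  refine ⟨hdel, heps, hc1, hc0, ?_, ?_, ?_⟩
  · intro hm; rw [hm] at hc0; simp at hc0
  · intro hm; rw [hm] at hc0; simp at hc0
  · intro hm; rw [hm] at hc0; simp at hc0
end
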